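/- arXiv:2009.04228 — 4 statements merged into one kernel-verified Lean document; each statement's English description precedes it below -/
import Mathlib

section
/- Let γ ∈ (0,1) and suppose |√2·n + m| ≥ γ/|n| for all integers n ≠ 0 and m. Let p ≥ 2 be an integer. Define frequencies ω(j) = 1 for j = 0, ω(j) = √2|j| for j ∈ S = {±1, ±p}, and ω(j) = |j| for j ∉ S ∪ {0}. If (α, β) ∈ N^Z × N^Z are finitely supported with Σ_{j∈S}(α_j + β_j) = p, and there is exactly one index j ∉ S with α_j + β_j = 1 (all other indices outside S having α_j = β_j = 0), then the resonance combination Ω(α,β) = Σ_j ω(j)(α_j - β_j) satisfies |Ω(α,β)| ≥ γ/p². -/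
/-- Small divisor estimate for the wave equation: if exactly one normal mode enters,
the resonance combination Ω(α,β) has the form √2·n + m and satisfies |Ω| ≥ γ/p². -/
theorem stmt1 (γ : ℝ) (hγ : γ ∈ Set.Ioo (0:ℝ) 1)
    (hdioph : ∀ n m : ℤ, n ≠ 0 → γ / |(n:ℝ)| ≤ |Real.sqrt 2 * n + m|)
    (p : ℤ) (hp : 2 ≤ p)
    (S : Finset ℤ) (hS : S = {1, -1, p, -p})
    (ω : ℤ → ℝ)
    (hω : ω = fun j => if j = 0 then 1 else if j ∈ S then Real.sqrt 2 * |(j:ℝ)| else |(j:ℝ)|)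
    (α β : ℤ →₀ ℕ)
    (hsum : (∑ j ∈ S, ((α j : ℤ) + (β j : ℤ))) = p)
    (j0 : ℤ) (hj0 : j0 ∉ S) (hj0v : α j0 + β j0 = 1)
    (hother : ∀ j : ℤ, j ∉ S → j ≠ j0 → α j = 0 ∧ β j = 0) :
    γ / (p:ℝ)^2 ≤ |∑ j ∈ α.support ∪ β.support, ω j * ((α j : ℝ) - (β j : ℝ))| := by
  obtain ⟨hγ0, hγ1⟩ := hγ
  have h0S : (0:ℤ) ∉ S := by simp [hS]; omega
  set n : ℤ := ∑ j ∈ S, |j| * ((α j : ℤ) - (β j : ℤ)) with hn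
  set m : ℤ := (if j0 = 0 then 1 else |j0|) * ((α j0 : ℤ) - (β j0 : ℤ)) with hm
  set f : ℤ → ℝ := fun j => ω j * ((α j : ℝ) - (β j : ℝ)) with hf
  set U : Finset ℤ := (α.support ∪ β.support) ∪ (insert j0 S) with hU
  have hfz : ∀ j ∉ α.support ∪ β.support, f j = 0 := by
    intro j hj
    simp [Finsupp.mem_support_iff] at hj
    simp [hf, hj.1, hj.2]
  have h1 : ∑ j ∈ α.support ∪ β.support, f j = ∑ j ∈ U, f j :=
    Finset.sum_subset Finset.subset_union_left (fun j _ hj => hfz j hj)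
  have h2 : ∑ j ∈ U, f j = ∑ j ∈ insert j0 S, f j := by
    refine (Finset.sum_subset Finset.subset_union_right ?_).symm
    intro j _ hj
    simp at hj
    obtain ⟨ha, hb⟩ := hother j hj.2 hj.1
    simp [hf, ha, hb]
  have h3 : ∑ j ∈ insert j0 S, f j = f j0 + ∑ j ∈ S, f j := Finset.sum_insert hj0
  have hfj0 : f j0 = (m : ℝ) := by
    by_cases h : j0 = 0
    · simp [hf, hω, h, hm, h0S]
    · simp only [hf, hω, hm, if_neg h, if_neg hj0]
      push_cast
      ring
  have hfS : ∑ j ∈ S, f j = Real.sqrt 2 * (n : ℝ) := by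
    rw [hn]
    push_cast
    rw [Finset.mul_sum]
    refine Finset.sum_congr rfl (fun j hj => ?_)
    have hjne : j ≠ 0 := fun h => h0S (h ▸ hj)
    simp only [hf, hω, hjne, if_false, hj, if_true]
    ring
  have hΩ : ∑ j ∈ α.support ∪ β.support, f j = Real.sqrt 2 * (n:ℝ) + (m:ℝ) := by
    rw [h1, h2, h3, hfj0, hfS]; ring
  rw [hΩ]
  have hab : (α j0 : ℤ) + (β j0 : ℤ) = 1 := by exact_mod_cast hj0v
  by_cases hn0 : n = 0
  · have hd : (α j0:ℤ) - β j0 = 1 ∨ (α j0:ℤ) - β j0 = -1 := by omega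
    have habs : |(α j0:ℤ) - (β j0:ℤ)| = 1 := by rcases hd with h|h <;> simp [h]
    have hm1 : 1 ≤ |m| := by
      rw [hm, abs_mul, habs, mul_one]
      rcases em (j0 = 0) with h | h
      · simp [h]
      · rw [if_neg h, abs_abs]; exact Int.one_le_abs h
    have hp1 : (1:ℝ) ≤ (p:ℝ)^2 := by
      have : (1:ℝ) ≤ (p:ℝ) := by exact_mod_cast (by omega : (1:ℤ) ≤ p)
      nlinarith
    have hle : γ / (p:ℝ)^2 ≤ 1 := by
      rw [div_le_one (by linarith)]
      linarith
    have hmr : (1:ℝ) ≤ |(m:ℝ)| := by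
      rw [← Int.cast_abs]
      exact_mod_cast hm1
    rw [hn0]
    simp only [Int.cast_zero, mul_zero, zero_add]
    linarith
  · have key := hdioph n m hn0
    have hnb : |n| ≤ p^2 := by
      have step1 : |n| ≤ ∑ j ∈ S, |j| * ((α j:ℤ) + β j) := by
        refine (Finset.abs_sum_le_sum_abs _ _).trans ?_
        refine Finset.sum_le_sum (fun j hj => ?_)
        rw [abs_mul, abs_abs]
        have h1' : |(α j:ℤ) - (β j:ℤ)| ≤ (α j:ℤ) + β j := by
          rw [abs_le]; omega
        exact mul_le_mul_of_nonneg_left h1' (abs_nonneg _)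
      have step2 : ∑ j ∈ S, |j| * ((α j:ℤ) + β j) ≤ ∑ j ∈ S, p * ((α j:ℤ) + β j) := by
        refine Finset.sum_le_sum (fun j hj => ?_)
        have hjp : |j| ≤ p := by
          rw [hS] at hj; simp at hj
          rcases hj with h|h|h|h <;> subst h <;> rw [abs_le] <;> omega
        exact mul_le_mul_of_nonneg_right hjp (by omega)
      have step3 : ∑ j ∈ S, p * ((α j:ℤ) + β j) = p^2 := by
        rw [← Finset.mul_sum, hsum]; ring
      omega
    have hnpos : (0:ℤ) < |n| := abs_pos.mpr hn0
    calc γ / (p:ℝ)^2 ≤ γ / |(n:ℝ)| := by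
          rw [← Int.cast_abs]
          apply div_le_div_of_nonneg_left hγ0.le
          · exact_mod_cast hnpos
          · exact_mod_cast hnb
      _ ≤ _ := key
end

section
/- Let p be an even positive integer. Suppose nonnegative integers α_1, α_{-1}, α_p, α_{-p}, β_1, β_{-1}, β_p, β_{-p} satisfy: (sum condition) α_1+α_{-1}+α_p+α_{-p}+β_1+β_{-1}+β_p+β_{-p} = p+1; (resonance condition) (α_1+α_{-1}-β_1-β_{-1}) + p(α_p+α_{-p}-β_p-β_{-p}) = 0; and (momentum condition) (α_1-α_{-1}-β_1+β_{-1}) + p(α_p-α_{-p}-β_p+β_{-p}) = 0. Then the tuple (α,β) is one of exactly four possibilities: (β_1 = p, α_p = 1, all others zero), (β_{-1} = p, α_{-p} = 1, all others zero), (α_1 = p, β_p = 1, all others zero), or (α_{-1} = p, β_{-p} = 1, all others zero). In particular these correspond to the resonant monomials z_1^p z̄_p, z_{-1}^p z̄_{-p} and their conjugates. -/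
set_option maxHeartbeats 1600000
set_option linter.all false


/-- Classification of the resonant monomials supported on the tangential set S = {±1, ±p}
for the wave equation: the only resonant momentum-preserving monomials of degree p+1
are z₁ᵖ z̄ₚ, z₋₁ᵖ z̄₋ₚ and their conjugates. -/
theorem stmt2 (p : ℕ) (hp : 0 < p) (hpe : Even p)
    (a1 am1 ap amp b1 bm1 bp bmp : ℕ)
    (hsum : a1 + am1 + ap + amp + b1 + bm1 + bp + bmp = p + 1)
    (hres : ((a1:ℤ) + am1 - b1 - bm1) + p * ((ap:ℤ) + amp - bp - bmp) = 0)
    (hmom : ((a1:ℤ) - am1 - b1 + bm1) + p * ((ap:ℤ) - amp - bp + bmp) = 0) :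
    (a1 = 0 ∧ am1 = 0 ∧ ap = 1 ∧ amp = 0 ∧ b1 = p ∧ bm1 = 0 ∧ bp = 0 ∧ bmp = 0) ∨
    (a1 = 0 ∧ am1 = 0 ∧ ap = 0 ∧ amp = 1 ∧ b1 = 0 ∧ bm1 = p ∧ bp = 0 ∧ bmp = 0) ∨
    (a1 = p ∧ am1 = 0 ∧ ap = 0 ∧ amp = 0 ∧ b1 = 0 ∧ bm1 = 0 ∧ bp = 1 ∧ bmp = 0) ∨
    (a1 = 0 ∧ am1 = p ∧ ap = 0 ∧ amp = 0 ∧ b1 = 0 ∧ bm1 = 0 ∧ bp = 0 ∧ bmp = 1) := by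
  obtain ⟨k, hk⟩ := hpe
  have h1' : 2 * ((a1:ℤ) - b1) = 2 * ((p:ℤ) * ((bp:ℤ) - ap)) := by linear_combination hres + hmom
  have h2' : 2 * ((am1:ℤ) - bm1) = 2 * ((p:ℤ) * ((bmp:ℤ) - amp)) := by linear_combination hres - hmom
  have h1 : (a1:ℤ) - b1 = p * ((bp:ℤ) - ap) := by linarith
  have h2 : (am1:ℤ) - bm1 = p * ((bmp:ℤ) - amp) := by linarith
  have hp0 : (0:ℤ) ≤ p := by positivity
  have hp2 : 2 ≤ p := by omega
  have he1 : (bp:ℤ) - ap = -1 ∨ (bp:ℤ) - ap = 0 ∨ (bp:ℤ) - ap = 1 := by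
    by_contra h
    have h' : (bp:ℤ) - ap ≤ -2 ∨ 2 ≤ (bp:ℤ) - ap := by omega
    rcases h' with h' | h'
    · have hm := mul_le_mul_of_nonneg_left h' hp0
      rw [← h1] at hm
      omega
    · have hm := mul_le_mul_of_nonneg_left h' hp0
      rw [← h1] at hm
      omega
  have he2 : (bmp:ℤ) - amp = -1 ∨ (bmp:ℤ) - amp = 0 ∨ (bmp:ℤ) - amp = 1 := by
    by_contra h
    have h' : (bmp:ℤ) - amp ≤ -2 ∨ 2 ≤ (bmp:ℤ) - amp := by omega
    rcases h' with h' | h'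
    · have hm := mul_le_mul_of_nonneg_left h' hp0
      rw [← h2] at hm
      omega
    · have hm := mul_le_mul_of_nonneg_left h' hp0
      rw [← h2] at hm
      omega
  rcases he1 with he1 | he1 | he1 <;> rcases he2 with he2 | he2 | he2
  all_goals rw [he1] at h1; rw [he2] at h2
  all_goals simp only [mul_neg_one, mul_zero, mul_one] at h1 h2
  all_goals clear hres hmom h1' h2'
  all_goals omega
end

section
/- After the linear symplectic change of variables φ₁ = θ₁, φ_p = −p θ₁ + θ_p, J₁ = I₁ + p I_p, J_p = I_p, the Hamiltonian G = λ I₁^{p/2}√(I_p) cos(pθ₁ − θ_p) becomes G* = λ (J₁ − p J_p)^{p/2} √(J_p) cos(φ_p), and the section {φ_p = π/2} is invariant under the flow of G*, on which the dynamics reduces to J₁' = 0 and J_p' = λ (J₁ − p J_p)^{p/2} √(J_p). -/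
/-! The change of variables only rewrites the angle `pθ₁ − θₚ` as `−φₚ`, and `cos` is even.
For the invariance, `y = cos ∘ φₚ` solves the linear equation `y' = −(A sin φₚ) y`, so the
integrating factor shows that `y` vanishes identically once it vanishes at `t = 0`; then
`φₚ' = A cos φₚ = 0` and `φₚ` stays at `π/2`, where `sin φₚ = 1`. -/

open Real

theorem eq_of_hasDerivAt_zero {f : ℝ → ℝ} (hf : ∀ t, HasDerivAt f 0 t) (t s : ℝ) :
    f t = f s :=
  is_const_of_deriv_eq_zero (fun t => (hf t).differentiableAt) (fun t => (hf t).deriv) t s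

theorem eq_mul_exp_integral_of_hasDerivAt_mul_self {a y : ℝ → ℝ} (ha : Continuous a)
    (hy : ∀ t, HasDerivAt y (a t * y t) t) (t₀ t : ℝ) :
    y t = y t₀ * exp (∫ s in t₀..t, a s) := by
  set G : ℝ → ℝ := fun t => ∫ s in t₀..t, a s
  have hG : ∀ t, HasDerivAt G (a t) t := fun t =>
    (ha.integral_hasStrictDerivAt t₀ t).hasDerivAt
  have hconst : ∀ t, HasDerivAt (fun t => y t * exp (-G t)) 0 t := fun t =>
    ((hy t).mul (hG t).neg.exp).congr_deriv (by ring)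
  have key := eq_of_hasDerivAt_zero hconst t t₀
  simp only [G, intervalIntegral.integral_same, neg_zero, exp_zero, mul_one] at key
  rw [← key, mul_assoc, ← exp_add, neg_add_cancel, exp_zero, mul_one]

theorem eq_of_hasDerivAt_mul_cos {A φ : ℝ → ℝ} (hA : Continuous A)
    (hφ : ∀ t, HasDerivAt φ (A t * cos (φ t)) t) {t₀ : ℝ} (h₀ : cos (φ t₀) = 0) (t : ℝ) :
    φ t = φ t₀ := by
  have hφc : Continuous φ := continuous_iff_continuousAt.2 fun t => (hφ t).continuousAt
  have hcos : ∀ t, HasDerivAt (fun t => cos (φ t)) (-(A t * sin (φ t)) * cos (φ t)) t :=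
    fun t => (hφ t).cos.congr_deriv (by ring)
  have hcos_zero : ∀ t, cos (φ t) = 0 := fun t => by
    rw [eq_mul_exp_integral_of_hasDerivAt_mul_self (hA.mul (continuous_sin.comp hφc)).neg
      hcos t₀ t, h₀, zero_mul]
  refine eq_of_hasDerivAt_zero (fun t => ?_) t t₀
  simpa only [hcos_zero t, mul_zero] using hφ t

theorem stmt10_general (p : ℕ) (lam : ℝ)
    (J1 Jp φp A : ℝ → ℝ) (hA : Continuous A)
    (hφ : ∀ t, HasDerivAt φp (A t * Real.cos (φp t)) t)
    (hJ1 : ∀ t, HasDerivAt J1 0 t)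
    (hJp : ∀ t, HasDerivAt Jp
      (lam * (J1 t - p * Jp t) ^ ((p:ℝ)/2) * Real.sqrt (Jp t) * Real.sin (φp t)) t)
    (hinit : φp 0 = Real.pi / 2) :
    (∀ θ1 θp I1 Ip : ℝ, 0 < I1 → 0 < Ip →
      lam * I1 ^ ((p:ℝ)/2) * Real.sqrt Ip * Real.cos (p * θ1 - θp)
        = lam * ((I1 + p * Ip) - p * Ip) ^ ((p:ℝ)/2) * Real.sqrt Ip
            * Real.cos (-(p:ℝ) * θ1 + θp)) ∧
    (∀ t, φp t = Real.pi / 2) ∧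
    (∀ t, HasDerivAt Jp (lam * (J1 t - p * Jp t) ^ ((p:ℝ)/2) * Real.sqrt (Jp t)) t) ∧
    (∀ t, J1 t = J1 0) := by
  have hsection : ∀ t, φp t = π / 2 := fun t => by
    rw [eq_of_hasDerivAt_mul_cos hA hφ (by rw [hinit, cos_pi_div_two]) t, hinit]
  refine ⟨fun θ1 θp I1 Ip _ _ => ?_, hsection, fun t => ?_,
    fun t => eq_of_hasDerivAt_zero hJ1 t 0⟩
  · rw [add_sub_cancel_right, ← cos_neg (p * θ1 - θp), neg_sub, sub_eq_neg_add, neg_mul]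
  · simpa only [hsection t, sin_pi_div_two, mul_one] using hJp t

/-- After the symplectic change φₚ = −pθ₁ + θₚ, J₁ = I₁ + pIₚ, Jₚ = Iₚ, the Hamiltonian
G = λ I₁^{p/2}√Iₚ cos(pθ₁−θₚ) becomes G* = λ(J₁−pJₚ)^{p/2}√Jₚ cos φₚ; the section
{φₚ = π/2} is invariant (φₚ' is proportional to cos φₚ), on which J₁' = 0 and
Jₚ' = λ(J₁−pJₚ)^{p/2}√Jₚ. -/
theorem stmt10 (p : ℕ) (hp : 2 ≤ p) (lam : ℝ) (hlam : 0 < lam)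
    (J1 Jp φp A : ℝ → ℝ) (hA : Continuous A)
    (hφ : ∀ t, HasDerivAt φp (A t * Real.cos (φp t)) t)
    (hJ1 : ∀ t, HasDerivAt J1 0 t)
    (hJp : ∀ t, HasDerivAt Jp
      (lam * (J1 t - p * Jp t) ^ ((p:ℝ)/2) * Real.sqrt (Jp t) * Real.sin (φp t)) t)
    (hinit : φp 0 = Real.pi / 2) :
    (∀ θ1 θp I1 Ip : ℝ, 0 < I1 → 0 < Ip →
      lam * I1 ^ ((p:ℝ)/2) * Real.sqrt Ip * Real.cos (p * θ1 - θp)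
        = lam * ((I1 + p * Ip) - p * Ip) ^ ((p:ℝ)/2) * Real.sqrt Ip
            * Real.cos (-(p:ℝ) * θ1 + θp)) ∧
    (∀ t, φp t = Real.pi / 2) ∧
    (∀ t, HasDerivAt Jp (lam * (J1 t - p * Jp t) ^ ((p:ℝ)/2) * Real.sqrt (Jp t)) t) ∧
    (∀ t, J1 t = J1 0) :=
  stmt10_general p lam J1 Jp φp A hA hφ hJ1 hJp hinit
end

section
/- Consider the ODE J' = 2(a − J)√((b + J) J) with parameters a > b > 0 and initial condition J(0) = ε where 0 < ε. Suppose a = (c − ε)/3 + ε and b = (c − ε)/3 − ε with c > (8/3)ε. Then the solution is monotone increasing and reaches c/6 at a time T₀ = (1/2)∫_ε^{c/6} [(a − J)√((b+J)J)]^{−1} dJ which satisfies T₀ ≤ 6/c. -/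
/-!
Separation of variables. Where `g > 0`, the time map `F x = ∫_{x₀}^x dy / g y` is strictly
increasing with `F' = 1 / g`, so its inverse `J` satisfies `J' = g ∘ J`, `J 0 = x₀`, and reaches
`x₁` at time `F x₁`. Here `g y = 2 (a - y) √((b + y) y)` is positive on `(0, a)`, which contains
`ε` and `c / 6`. On `[ε, c/6]` both `a - y` and `b + y` are at least `c / 6`, so
`g y ≥ 2 (c/6)^{3/2} √y`, and integrating `1 / √y` gives `T₀ ≤ √(c/6) / (c/6)^{3/2} = 6 / c`.
If `c / 6 < ε`, then `T₀ < 0`.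
-/

open Set Filter Topology intervalIntegral

noncomputable def travelTime (g : ℝ → ℝ) (x₀ x : ℝ) : ℝ := ∫ y in x₀..x, (g y)⁻¹

@[simp]
theorem travelTime_self (g : ℝ → ℝ) (x₀ : ℝ) : travelTime g x₀ x₀ = 0 := integral_same

theorem StrictMonoOn.image_Ioo_mem_nhds {α β : Type*} [ConditionallyCompleteLinearOrder α]
    [TopologicalSpace α] [OrderTopology α] [DenselyOrdered α] [LinearOrder β] [TopologicalSpace β]
    [OrderTopology β] {f : α → β} {p q y : α}
    (hmono : StrictMonoOn f (Ioo p q)) (hf : ContinuousOn f (Ioo p q)) (hy : y ∈ Ioo p q) :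
    f '' Ioo p q ∈ 𝓝 (f y) := by
  obtain ⟨u, hpu, huy⟩ := exists_between hy.1
  obtain ⟨v, hyv, hvq⟩ := exists_between hy.2
  have hIcc : Icc u v ⊆ Ioo p q := Icc_subset_Ioo hpu hvq
  have hu : u ∈ Ioo p q := hIcc (left_mem_Icc.2 (huy.trans hyv).le)
  have hv : v ∈ Ioo p q := hIcc (right_mem_Icc.2 (huy.trans hyv).le)
  refine mem_of_superset (Icc_mem_nhds (hmono hu hy huy) (hmono hy hv hyv)) ?_
  exact (intermediate_value_Icc (huy.trans hyv).le (hf.mono hIcc)).trans (image_mono hIcc)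

theorem integral_inv_sqrt {x₀ x₁ : ℝ} (h₀ : 0 < x₀) (h₁ : 0 < x₁) :
    ∫ x in x₀..x₁, (√x)⁻¹ = 2 * (√x₁ - √x₀) := by
  have hpos : ∀ x ∈ uIcc x₀ x₁, 0 < x := fun x hx => (lt_min h₀ h₁).trans_le hx.1
  have hderiv : ∀ x ∈ uIcc x₀ x₁, HasDerivAt (fun x => 2 * √x) (√x)⁻¹ x := by
    intro x hx
    refine ((Real.hasDerivAt_sqrt (hpos x hx).ne').const_mul 2).congr_deriv ?_
    field_simp
  have hcont : ContinuousOn (fun x => (√x)⁻¹) (uIcc x₀ x₁) :=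
    Real.continuous_sqrt.continuousOn.inv₀ fun x hx => (Real.sqrt_pos.2 (hpos x hx)).ne'
  rw [integral_eq_sub_of_hasDerivAt hderiv hcont.intervalIntegrable, mul_sub]

theorem integral_inv_le_of_mul_sqrt_le {f : ℝ → ℝ} {m x₀ x₁ : ℝ} (hm : 0 < m) (h₀ : 0 < x₀)
    (h : x₀ ≤ x₁) (hf : ContinuousOn f (Icc x₀ x₁)) (hle : ∀ x ∈ Icc x₀ x₁, m * √x ≤ f x) :
    ∫ x in x₀..x₁, (f x)⁻¹ ≤ 2 * √x₁ / m := by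
  have hsqrt : ∀ x ∈ Icc x₀ x₁, 0 < m * √x := fun x hx =>
    mul_pos hm (Real.sqrt_pos.2 (h₀.trans_le hx.1))
  have hinv : ContinuousOn (fun x => (f x)⁻¹) (Icc x₀ x₁) :=
    hf.inv₀ fun x hx => ((hsqrt x hx).trans_le (hle x hx)).ne'
  have hinv_sqrt : ContinuousOn (fun x => m⁻¹ * (√x)⁻¹) (Icc x₀ x₁) :=
    continuousOn_const.mul (Real.continuous_sqrt.continuousOn.inv₀ fun x hx =>
      (Real.sqrt_pos.2 (h₀.trans_le hx.1)).ne')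
  calc ∫ x in x₀..x₁, (f x)⁻¹ ≤ ∫ x in x₀..x₁, m⁻¹ * (√x)⁻¹ :=
        integral_mono_on h (hinv.intervalIntegrable_of_Icc h)
          (hinv_sqrt.intervalIntegrable_of_Icc h) fun x hx => by
            rw [← mul_inv]; exact inv_anti₀ (hsqrt x hx) (hle x hx)
    _ = m⁻¹ * (2 * (√x₁ - √x₀)) := by
        rw [integral_const_mul, integral_inv_sqrt h₀ (h₀.trans_le h)]
    _ ≤ 2 * √x₁ / m := by
        rw [div_eq_inv_mul]
        gcongr
        linarith [Real.sqrt_nonneg x₀]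

section Quadrature

variable {g : ℝ → ℝ} {p q x₀ : ℝ}

theorem hasDerivAt_travelTime {x : ℝ} (hg : ContinuousOn g (Ioo p q))
    (hpos : ∀ y ∈ Ioo p q, 0 < g y) (hx₀ : x₀ ∈ Ioo p q) (hx : x ∈ Ioo p q) :
    HasDerivAt (travelTime g x₀) (g x)⁻¹ x := by
  have hinv : ContinuousOn (fun y => (g y)⁻¹) (Ioo p q) := hg.inv₀ fun y hy => (hpos y hy).ne'
  have hsub : uIcc x₀ x ⊆ Ioo p q := ordConnected_Ioo.uIcc_subset hx₀ hx
  exact integral_hasDerivAt_right (hinv.mono hsub).intervalIntegrable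
    (hinv.stronglyMeasurableAtFilter isOpen_Ioo x hx) (hinv.continuousAt (isOpen_Ioo.mem_nhds hx))

theorem strictMonoOn_travelTime (hg : ContinuousOn g (Ioo p q))
    (hpos : ∀ y ∈ Ioo p q, 0 < g y) (hx₀ : x₀ ∈ Ioo p q) :
    StrictMonoOn (travelTime g x₀) (Ioo p q) := by
  refine strictMonoOn_of_deriv_pos (convex_Ioo p q)
    (fun x hx => (hasDerivAt_travelTime hg hpos hx₀ hx).continuousAt.continuousWithinAt)
    fun x hx => ?_
  rw [interior_Ioo] at hx
  rw [(hasDerivAt_travelTime hg hpos hx₀ hx).deriv]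
  exact inv_pos.2 (hpos x hx)

theorem exists_hasDerivAt_travelTime_eq {x₁ : ℝ} (hg : ContinuousOn g (Ioo p q))
    (hpos : ∀ y ∈ Ioo p q, 0 < g y) (hx₀ : x₀ ∈ Ioo p q) (hx₁ : x₁ ∈ Ioo p q) :
    ∃ J : ℝ → ℝ, J 0 = x₀ ∧ J (travelTime g x₀ x₁) = x₁ ∧
      (∀ t ∈ uIcc 0 (travelTime g x₀ x₁), HasDerivAt J (g (J t)) t) ∧
      MonotoneOn J (uIcc 0 (travelTime g x₀ x₁)) := by
  set F := travelTime g x₀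
  have hF := strictMonoOn_travelTime hg hpos hx₀
  have hFcont : ContinuousOn F (Ioo p q) := fun x hx =>
    (hasDerivAt_travelTime hg hpos hx₀ hx).continuousAt.continuousWithinAt
  set J := Function.invFunOn F (Ioo p q)
  have hJF : ∀ y ∈ Ioo p q, J (F y) = y := fun y hy => hF.injOn.leftInvOn_invFunOn hy
  have hF₀ : F x₀ = 0 := travelTime_self g x₀
  have hsub : uIcc 0 (F x₁) ⊆ F '' Ioo p q := by
    rw [← hF₀]
    exact (intermediate_value_uIcc (hFcont.mono (ordConnected_Ioo.uIcc_subset hx₀ hx₁))).trans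
      (image_mono (ordConnected_Ioo.uIcc_subset hx₀ hx₁))
  have hJmono : StrictMonoOn J (F '' Ioo p q) := by
    rintro _ ⟨y, hy, rfl⟩ _ ⟨z, hz, rfl⟩ hyz
    rw [hJF y hy, hJF z hz]
    exact (hF.lt_iff_lt hy hz).1 hyz
  refine ⟨J, by rw [← hF₀, hJF x₀ hx₀], hJF x₁ hx₁, ?_, hJmono.monotoneOn.mono hsub⟩
  intro t ht
  obtain ⟨y, hy, rfl⟩ := hsub ht
  have hnhds := hF.image_Ioo_mem_nhds hFcont hy
  have hJcont : ContinuousAt J (F y) := hJmono.continuousAt_of_image_mem_nhds hnhds <| by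
    rw [hJF y hy, hF.injOn.leftInvOn_invFunOn.image_image]
    exact isOpen_Ioo.mem_nhds hy
  have hFJ : ∀ᶠ s in 𝓝 (F y), F (J s) = s :=
    mem_of_superset hnhds fun s hs => (surjOn_image F (Ioo p q)).rightInvOn_invFunOn hs
  have hJy : J (F y) ∈ Ioo p q := by rwa [hJF y hy]
  simpa using (hasDerivAt_travelTime hg hpos hx₀ hJy).of_local_left_inverse hJcont
    (inv_ne_zero (hpos _ hJy).ne') hFJ

end Quadrature

theorem stmt12_general (a b c ε : ℝ) (hε : 0 < ε)
    (ha : a = (c - ε)/3 + ε) (hb : b = (c - ε)/3 - ε)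
    (hb0 : 0 < b)
    (T0 : ℝ)
    (hT0 : T0 = (1/2) * ∫ J in ε..(c/6), ((a - J) * Real.sqrt ((b + J) * J))⁻¹) :
    (∃ J : ℝ → ℝ, J 0 = ε ∧
      (∀ t ∈ Set.Icc (0:ℝ) T0,
        HasDerivAt J (2 * (a - J t) * Real.sqrt ((b + J t) * J t)) t) ∧
      MonotoneOn J (Set.Icc (0:ℝ) T0) ∧ J T0 = c/6) ∧
    T0 ≤ 6 / c := by
  have hc : 0 < c := by linarith
  set g : ℝ → ℝ := fun y => 2 * (a - y) * √((b + y) * y)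
  have hg : Continuous g := by fun_prop
  have hg_pos : ∀ y ∈ Ioo 0 a, 0 < g y := fun y ⟨hy₀, hya⟩ =>
    mul_pos (by linarith) (Real.sqrt_pos.2 (by positivity))
  have hT : T0 = travelTime g ε (c/6) := by
    rw [hT0, travelTime, ← integral_const_mul]
    congr 1
    ext y
    rw [show g y = 2 * ((a - y) * √((b + y) * y)) from mul_assoc _ _ _, mul_inv (2 : ℝ), one_div]
  have hε_mem : ε ∈ Ioo 0 a := ⟨hε, by linarith⟩
  have hc_mem : c/6 ∈ Ioo 0 a := ⟨by linarith, by linarith⟩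
  obtain ⟨J, hJ0, hJT, hJ', hJmono⟩ :=
    exists_hasDerivAt_travelTime_eq hg.continuousOn hg_pos hε_mem hc_mem
  rw [← hT] at hJT hJ' hJmono
  refine ⟨⟨J, hJ0, fun t ht => hJ' t (Icc_subset_uIcc ht), hJmono.mono Icc_subset_uIcc, hJT⟩, ?_⟩
  rw [hT]
  rcases le_or_gt ε (c/6) with h | h
  · calc travelTime g ε (c/6) ≤ 2 * √(c/6) / (2 * (c/6) * √(c/6)) := by
          refine integral_inv_le_of_mul_sqrt_le (by positivity) hε h hg.continuousOn fun x hx => ?_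
          show _ ≤ 2 * (a - x) * √((b + x) * x)
          rw [Real.sqrt_mul (by linarith [hx.1]), ← mul_assoc]
          gcongr <;> linarith [hx.1, hx.2]
      _ = 6 / c := by field_simp
  · have := strictMonoOn_travelTime hg.continuousOn hg_pos hε_mem hc_mem hε_mem h
    rw [travelTime_self] at this
    exact this.le.trans (by positivity)

/-- Drifting orbit for the NLS resonant model: J' = 2(a − J)√((b+J)J), J(0) = ε,
reaches c/6 at time T₀ = (1/2)∫ [(a−J)√((b+J)J)]⁻¹ dJ ≤ 6/c. -/
theorem stmt12 (a b c ε : ℝ) (hε : 0 < ε) (hc : 8/3 * ε < c)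
    (ha : a = (c - ε)/3 + ε) (hb : b = (c - ε)/3 - ε)
    (hb0 : 0 < b) (hba : b < a)
    (T0 : ℝ)
    (hT0 : T0 = (1/2) * ∫ J in ε..(c/6), ((a - J) * Real.sqrt ((b + J) * J))⁻¹) :
    (∃ J : ℝ → ℝ, J 0 = ε ∧
      (∀ t ∈ Set.Icc (0:ℝ) T0,
        HasDerivAt J (2 * (a - J t) * Real.sqrt ((b + J t) * J t)) t) ∧
      MonotoneOn J (Set.Icc (0:ℝ) T0) ∧ J T0 = c/6) ∧
    T0 ≤ 6 / c :=
  stmt12_general a b c ε hε ha hb hb0 T0 hT0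
end
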